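/- Let m ≥ 2 and let x < m be a positive integer relatively prime to m, and let m/x = n_1 + 1/(n_2 + 1/(⋯ + 1/n_l)) be a regular continued fraction expansion with all n_j ≥ 1. Let y < m be the unique positive integer with x·y ≡ (−1)^{l+1} (mod m). Then m/y = n_l + 1/(n_{l−1} + 1/(⋯ + 1/n_1)). -/

import Mathlib

/-!
Encode `n₁, …, n_l` by the product `K` of the matrices `!![nⱼ, 1; 1, 0]`. Its first column
`(p, q)` satisfies `cfEval ns = p / q`, and `det K = (-1)^l` makes this fraction reduced, so
`p = m` and `q = x`. Reversing the list transposes `K`, so `cfEval ns.reverse = p / r` where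
`r = K 0 1`; expanding the determinant gives `x r ≡ (-1)^(l+1) (mod m)`, and `0 ≤ r ≤ m`
forces `r = y`.
-/

/-- value of the regular continued fraction `n₁ + 1/(n₂ + 1/(⋯ + 1/n_l))`
(the empty continued fraction has value `0`, and `1/0 = 0` in `ℚ` makes the
singleton case evaluate to `n₁`). -/
def cfEval : List ℤ → ℚ
  | [] => 0
  | n :: ns => (n : ℚ) + 1 / cfEval ns

open Matrix

def cfMatrix (ns : List ℤ) : Matrix (Fin 2) (Fin 2) ℤ :=
  (ns.map fun n => !![n, 1; 1, 0]).prod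

@[simp]
lemma cfMatrix_nil : cfMatrix [] = 1 := rfl

lemma cfMatrix_cons (a : ℤ) (ns : List ℤ) :
    cfMatrix (a :: ns) = !![a, 1; 1, 0] * cfMatrix ns := by
  simp [cfMatrix]

lemma cfMatrix_cons_zero_zero (a : ℤ) (ns : List ℤ) :
    cfMatrix (a :: ns) 0 0 = a * cfMatrix ns 0 0 + cfMatrix ns 1 0 := by
  simp [cfMatrix_cons, mul_apply, Fin.sum_univ_two]

lemma cfMatrix_cons_one_zero (a : ℤ) (ns : List ℤ) :
    cfMatrix (a :: ns) 1 0 = cfMatrix ns 0 0 := by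
  simp [cfMatrix_cons, mul_apply, Fin.sum_univ_two]

lemma cfMatrix_reverse (ns : List ℤ) : cfMatrix ns.reverse = (cfMatrix ns)ᵀ := by
  induction ns with
  | nil => simp
  | cons a ns ih =>
    have hsymm : (!![a, 1; 1, 0] : Matrix (Fin 2) (Fin 2) ℤ)ᵀ = !![a, 1; 1, 0] := by
      ext i j; fin_cases i <;> fin_cases j <;> rfl
    have hsnoc : cfMatrix (ns.reverse ++ [a]) = cfMatrix ns.reverse * !![a, 1; 1, 0] := by
      simp [cfMatrix]
    rw [List.reverse_cons, hsnoc, ih, cfMatrix_cons, transpose_mul, hsymm]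

lemma det_cfMatrix (ns : List ℤ) : (cfMatrix ns).det = (-1) ^ ns.length := by
  induction ns with
  | nil => simp
  | cons a ns ih =>
    rw [cfMatrix_cons, det_mul, ih, det_fin_two_of, List.length_cons, pow_succ]
    ring

lemma isCoprime_cfMatrix_zero_zero_one_zero (ns : List ℤ) :
    IsCoprime (cfMatrix ns 0 0) (cfMatrix ns 1 0) := by
  have hdet := det_fin_two (cfMatrix ns)
  rw [det_cfMatrix] at hdet
  rcases neg_one_pow_eq_or ℤ ns.length with h | h <;> rw [h] at hdet
  · exact ⟨cfMatrix ns 1 1, -cfMatrix ns 0 1, by linear_combination -hdet⟩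
  · exact ⟨-cfMatrix ns 1 1, cfMatrix ns 0 1, by linear_combination hdet⟩

section PositiveEntries

variable {ns : List ℤ} (hns : ∀ n ∈ ns, 1 ≤ n)
include hns

lemma cfMatrix_first_column_bounds :
    1 ≤ cfMatrix ns 0 0 ∧ 0 ≤ cfMatrix ns 1 0 ∧ cfMatrix ns 1 0 ≤ cfMatrix ns 0 0 := by
  induction ns with
  | nil => simp
  | cons a ns ih =>
    obtain ⟨hp, hq, -⟩ := ih fun n hn => hns n (List.mem_cons_of_mem a hn)
    have ha : 1 ≤ a := hns a List.mem_cons_self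
    rw [cfMatrix_cons_zero_zero, cfMatrix_cons_one_zero]
    exact ⟨by nlinarith, by omega, by nlinarith⟩

lemma cfEval_eq_cfMatrix_div :
    cfEval ns = (cfMatrix ns 0 0 : ℚ) / (cfMatrix ns 1 0 : ℚ) := by
  induction ns with
  | nil => simp [cfEval]
  | cons a ns ih =>
    have hns' : ∀ n ∈ ns, 1 ≤ n := fun n hn => hns n (List.mem_cons_of_mem a hn)
    have hp : (cfMatrix ns 0 0 : ℚ) ≠ 0 := by
      exact_mod_cast (zero_lt_one.trans_le (cfMatrix_first_column_bounds hns').1).ne'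
    rw [cfEval, ih hns', cfMatrix_cons_zero_zero, cfMatrix_cons_one_zero]
    push_cast
    field_simp

lemma cfEval_reverse_eq_cfMatrix_div :
    cfEval ns.reverse = (cfMatrix ns 0 0 : ℚ) / (cfMatrix ns 0 1 : ℚ) := by
  rw [cfEval_eq_cfMatrix_div fun n hn => hns n (List.mem_reverse.mp hn), cfMatrix_reverse,
    transpose_apply, transpose_apply]

lemma cfMatrix_zero_one_bounds : 0 ≤ cfMatrix ns 0 1 ∧ cfMatrix ns 0 1 ≤ cfMatrix ns 0 0 := by
  have := cfMatrix_first_column_bounds fun n hn => hns n (List.mem_reverse.mp hn)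
  simp only [cfMatrix_reverse, transpose_apply] at this
  exact this.2

lemma cfMatrix_first_column_eq {m x : ℤ} (hm : 0 < m) (hx : 0 < x) (hmx : IsCoprime m x)
    (hcf : cfEval ns = (m : ℚ) / (x : ℚ)) : cfMatrix ns 0 0 = m ∧ cfMatrix ns 1 0 = x := by
  rw [cfEval_eq_cfMatrix_div hns] at hcf
  have hq : 0 < cfMatrix ns 1 0 := by
    refine (cfMatrix_first_column_bounds hns).2.1.lt_of_ne fun h => ?_
    rw [← h, Int.cast_zero, div_zero, eq_comm] at hcf
    exact (div_pos (Int.cast_pos.mpr hm) (Int.cast_pos.mpr hx)).ne' hcf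
  exact Rat.div_int_inj hq hx
    (Int.isCoprime_iff_gcd_eq_one.mp (isCoprime_cfMatrix_zero_zero_one_zero ns))
    (Int.isCoprime_iff_gcd_eq_one.mp hmx) hcf

end PositiveEntries

theorem regular_cf_reverse_general (m x y : ℤ)
    (hx0 : 0 < x) (hcop : Int.gcd x m = 1)
    (ns : List ℤ) (hns : ∀ n ∈ ns, 1 ≤ n) (hcf : cfEval ns = (m : ℚ) / (x : ℚ))
    (hy0 : 0 < y) (hym : y < m) (hxy : m ∣ x * y - (-1) ^ (ns.length + 1)) :
    cfEval ns.reverse = (m : ℚ) / (y : ℚ) := by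
  have hmx : IsCoprime m x := Int.isCoprime_iff_gcd_eq_one.mpr (Int.gcd_comm m x ▸ hcop)
  obtain ⟨hpm, hqx⟩ := cfMatrix_first_column_eq hns (by omega) hx0 hmx hcf
  obtain ⟨hr0, hrm⟩ := cfMatrix_zero_one_bounds hns
  have hdet := det_fin_two (cfMatrix ns)
  rw [det_cfMatrix, hpm, hqx] at hdet
  have hdvd : m ∣ x * (y - cfMatrix ns 0 1) := by
    have : x * (y - cfMatrix ns 0 1) = (x * y - (-1) ^ (ns.length + 1)) - m * cfMatrix ns 1 1 := by
      rw [pow_succ]; linear_combination -hdet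
    rw [this]
    exact dvd_sub hxy (dvd_mul_right _ _)
  have hyr : y = cfMatrix ns 0 1 := sub_eq_zero.mp <|
    Int.eq_zero_of_abs_lt_dvd (hmx.dvd_of_dvd_mul_left hdvd) (by rw [abs_lt]; omega)
  rw [cfEval_reverse_eq_cfMatrix_div hns, hpm, hyr]

/-- Remark 3.3, second part: if `m/x = n₁ + 1/(n₂ + 1/(⋯ + 1/n_l))` is a regular
continued fraction expansion with all `nⱼ ≥ 1` and `y < m` is the unique positive
integer with `x y ≡ (-1)^(l+1) (mod m)`, then `m/y = n_l + 1/(n_{l-1} + 1/(⋯ + 1/n₁))`. -/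
theorem regular_cf_reverse (m x y : ℤ) (hm : 2 ≤ m)
    (hx0 : 0 < x) (hxm : x < m) (hcop : Int.gcd x m = 1)
    (ns : List ℤ) (hns : ∀ n ∈ ns, 1 ≤ n) (hcf : cfEval ns = (m : ℚ) / (x : ℚ))
    (hy0 : 0 < y) (hym : y < m) (hxy : m ∣ x * y - (-1) ^ (ns.length + 1)) :
    cfEval ns.reverse = (m : ℚ) / (y : ℚ) :=
  regular_cf_reverse_general m x y hx0 hcop ns hns hcf hy0 hym hxy
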